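/- arXiv:1912.09149 — 3 statements merged into one kernel-verified Lean document; each statement's English description precedes it below -/
import Mathlib

section
/- The set Ω = {(x,y) ∈ ℝ² : x² + y² = 1, −y² < 0} = S¹ \ {(1,0), (−1,0)} has exactly two connected components, while for every r > 0 the set S_r = {(x,y) ∈ ℝ² : x² + y² = r², x³ − y² < 0} is nonempty and connected. -/
/-!
Since `y ≠ 0` on `Ω`, the unit circle minus `(±1, 0)` splits into the open upper and lower
semicircles, each the image of an interval of angles; `{y > 0}` is clopen in `Ω`, so these
are its two components.

On the circle of radius `r`, `x³ - y² = x³ + x² - r²`, and `x³ + x² < r²` persists when `x`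
decreases within `[-r, r]` (for `x ≤ 0` it always holds). Moving the angle of a point of `S r`
away from `0`, towards `±π`, decreases `x`, so every point of `S r` is joined to `(-r, 0)` by an
arc inside `S r`.
-/

open Set Real

local notation "ℝ²" => EuclideanSpace ℝ (Fin 2)

theorem ConnectedComponents.natCard_eq_two {X : Type*} [TopologicalSpace X] {U : Set X}
    (hU : IsClopen U) (hUpre : IsPreconnected U) (hUcpre : IsPreconnected Uᶜ) {a b : X}
    (ha : a ∈ U) (hb : b ∉ U) : Nat.card (ConnectedComponents X) = 2 := by
  rw [Nat.card_eq_two_iff]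
  refine ⟨a, b, fun hab => hb ?_, ?_⟩
  · rw [ConnectedComponents.coe_eq_coe'] at hab
    exact hU.connectedComponent_subset ha (connectedComponent_eq hab ▸ mem_connectedComponent)
  · refine eq_univ_of_forall fun z => ?_
    obtain ⟨x, rfl⟩ := ConnectedComponents.surjective_coe z
    by_cases hx : x ∈ U
    · exact .inl (ConnectedComponents.coe_eq_coe'.2 (hUpre.subset_connectedComponent ha hx))
    · exact .inr (ConnectedComponents.coe_eq_coe'.2 (hUcpre.subset_connectedComponent hb hx))

theorem IsPreconnected.preimage_subtypeVal {X : Type*} [TopologicalSpace X] {s t : Set X}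
    (ht : IsPreconnected t) (hts : t ⊆ s) : IsPreconnected (((↑) : s → X) ⁻¹' t) :=
  Topology.IsInducing.subtypeVal.isPreconnected_image.1 <| by
    rwa [Subtype.image_preimage_coe, inter_eq_right.2 hts]

theorem Real.cos_le_cos_of_abs_le {θ φ : ℝ} (h : |θ| ≤ |φ|) (hφ : |φ| ≤ π) : cos φ ≤ cos θ := by
  rw [← cos_abs φ, ← cos_abs θ]
  exact cos_le_cos_of_nonneg_of_le_pi (abs_nonneg θ) hφ h

theorem cube_add_sq_lt_of_le {r x y : ℝ} (hr : 0 < r) (hx : -r ≤ x) (hxy : x ≤ y)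
    (hy : y ^ 3 + y ^ 2 < r ^ 2) : x ^ 3 + x ^ 2 < r ^ 2 := by
  rcases le_or_gt x 0 with h | h
  · nlinarith [mul_nonneg (neg_nonneg.2 h) (sq_nonneg x),
      mul_nonneg (neg_nonneg.2 h) (by linarith : 0 ≤ r + x), mul_pos hr hr]
  · have := pow_le_pow_left₀ h.le hxy 3
    have := pow_le_pow_left₀ h.le hxy 2
    linarith

noncomputable def polarPoint (r θ : ℝ) : ℝ² := !₂[r * cos θ, r * sin θ]

@[simp] theorem polarPoint_apply_zero (r θ : ℝ) : polarPoint r θ 0 = r * cos θ := by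
  simp [polarPoint]

@[simp] theorem polarPoint_apply_one (r θ : ℝ) : polarPoint r θ 1 = r * sin θ := by
  simp [polarPoint]

theorem polarPoint_sq_add_sq (r θ : ℝ) :
    polarPoint r θ 0 ^ 2 + polarPoint r θ 1 ^ 2 = r ^ 2 := by
  simp only [polarPoint_apply_zero, polarPoint_apply_one]
  linear_combination r ^ 2 * sin_sq_add_cos_sq θ

theorem polarPoint_neg_pi (r : ℝ) : polarPoint r (-π) = polarPoint r π := by
  simp [polarPoint]

theorem continuous_polarPoint (r : ℝ) : Continuous (polarPoint r) := by
  unfold polarPoint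
  fun_prop

theorem polarPoint_arg {r : ℝ} (hr : 0 ≤ r) {p : ℝ²} (hp : p 0 ^ 2 + p 1 ^ 2 = r ^ 2) :
    polarPoint r (Complex.arg ⟨p 0, p 1⟩) = p := by
  have hnorm : ‖(⟨p 0, p 1⟩ : ℂ)‖ = r := by
    rw [Complex.norm_def, Complex.normSq_mk, ← sq, ← sq, hp, sqrt_sq hr]
  ext i
  fin_cases i
  · simpa [hnorm] using Complex.norm_mul_cos_arg ⟨p 0, p 1⟩
  · simpa [hnorm] using Complex.norm_mul_sin_arg ⟨p 0, p 1⟩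

theorem joinedIn_polarPoint {S : Set ℝ²} {r a b : ℝ} (h : MapsTo (polarPoint r) (uIcc a b) S) :
    JoinedIn S (polarPoint r a) (polarPoint r b) :=
  (((convex_uIcc a b).isPathConnected nonempty_uIcc).image (continuous_polarPoint r)).joinedIn
    _ (mem_image_of_mem _ left_mem_uIcc) _ (mem_image_of_mem _ right_mem_uIcc) |>.mono
    h.image_subset

def upperSemicircle (r : ℝ) : Set ℝ² := {p | p 0 ^ 2 + p 1 ^ 2 = r ^ 2 ∧ 0 < p 1}

def lowerSemicircle (r : ℝ) : Set ℝ² := {p | p 0 ^ 2 + p 1 ^ 2 = r ^ 2 ∧ p 1 < 0}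

theorem upperSemicircle_eq_image {r : ℝ} (hr : 0 < r) :
    upperSemicircle r = polarPoint r '' Ioo 0 π := by
  ext p
  constructor
  · rintro ⟨hp, hy⟩
    refine ⟨_, ⟨?_, ?_⟩, polarPoint_arg hr.le hp⟩
    · exact (Complex.arg_nonneg_iff.2 hy.le).lt_of_ne'
        fun h => hy.ne' (Complex.arg_eq_zero_iff.1 h).2
    · exact Complex.arg_lt_pi_iff.2 (.inr hy.ne')
  · rintro ⟨θ, ⟨h0, hπ⟩, rfl⟩
    exact ⟨polarPoint_sq_add_sq r θ, by simpa using mul_pos hr (sin_pos_of_pos_of_lt_pi h0 hπ)⟩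

theorem lowerSemicircle_eq_image {r : ℝ} (hr : 0 < r) :
    lowerSemicircle r = polarPoint r '' Ioo (-π) 0 := by
  ext p
  constructor
  · rintro ⟨hp, hy⟩
    exact ⟨_, ⟨Complex.neg_pi_lt_arg _, Complex.arg_neg_iff.2 hy⟩, polarPoint_arg hr.le hp⟩
  · rintro ⟨θ, ⟨hπ, h0⟩, rfl⟩
    exact ⟨polarPoint_sq_add_sq r θ,
      by simpa using mul_neg_of_pos_of_neg hr (sin_neg_of_neg_of_neg_pi_lt h0 hπ)⟩

theorem isPreconnected_upperSemicircle {r : ℝ} (hr : 0 < r) :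
    IsPreconnected (upperSemicircle r) := by
  rw [upperSemicircle_eq_image hr]
  exact isPreconnected_Ioo.image _ (continuous_polarPoint r).continuousOn

theorem isPreconnected_lowerSemicircle {r : ℝ} (hr : 0 < r) :
    IsPreconnected (lowerSemicircle r) := by
  rw [lowerSemicircle_eq_image hr]
  exact isPreconnected_Ioo.image _ (continuous_polarPoint r).continuousOn

def Ω : Set ℝ² := {p | p 0 ^ 2 + p 1 ^ 2 = 1 ∧ -p 1 ^ 2 < 0}

def S (r : ℝ) : Set ℝ² := {p | p 0 ^ 2 + p 1 ^ 2 = r ^ 2 ∧ p 0 ^ 3 - p 1 ^ 2 < 0}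

theorem Ω_eq_circle_diff :
    Ω = {p : ℝ² | p 0 ^ 2 + p 1 ^ 2 = 1} \ {!₂[1, 0], !₂[-1, 0]} := by
  ext p
  simp only [Ω, mem_ofPred_eq, mem_sdiff, mem_insert_iff, mem_singleton_iff, neg_neg_iff_pos,
    sq_pos_iff, and_congr_right_iff]
  intro hp
  rw [not_iff_not]
  constructor
  · intro hy
    rw [hy, zero_pow two_ne_zero, add_zero, ← one_pow 2, sq_eq_sq_iff_eq_or_eq_neg] at hp
    rcases hp with hx | hx <;> [left; right] <;> ext i <;> fin_cases i <;> simp [hx, hy]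
  · rintro (rfl | rfl) <;> simp

theorem natCard_connectedComponents_Ω : Nat.card (ConnectedComponents Ω) = 2 := by
  have hcont : Continuous fun q : Ω => (q : ℝ²) 1 := by fun_prop
  have hne : ∀ q : Ω, (q : ℝ²) 1 ≠ 0 := fun q h => by simpa [h] using q.2.2
  have hsub : ∀ p ∈ upperSemicircle 1 ∪ lowerSemicircle 1, p ∈ Ω := by
    rintro p (⟨hp, hy⟩ | ⟨hp, hy⟩) <;> exact ⟨by simpa using hp, by nlinarith⟩
  have hcompl : {q : Ω | 0 < (q : ℝ²) 1}ᶜ = {q : Ω | (q : ℝ²) 1 < 0} := by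
    ext q
    simp [(hne q).le_iff_lt]
  refine ConnectedComponents.natCard_eq_two (U := {q : Ω | 0 < (q : ℝ²) 1})
    (a := ⟨!₂[0, 1], by norm_num [Ω]⟩) (b := ⟨!₂[0, -1], by norm_num [Ω]⟩)
    ⟨?_, isOpen_lt continuous_const hcont⟩ ?_ ?_ ?_ ?_
  · rw [← isOpen_compl_iff, hcompl]
    exact isOpen_lt hcont continuous_const
  · convert (isPreconnected_upperSemicircle one_pos).preimage_subtypeVal
      fun p hp => hsub p (.inl hp)
    ext q
    simp [upperSemicircle, q.2.1]
  · convert (isPreconnected_lowerSemicircle one_pos).preimage_subtypeVal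
      fun p hp => hsub p (.inr hp)
    ext q
    simp [lowerSemicircle, q.2.1, (hne q).le_iff_lt]
  · simp
  · simp

theorem isPathConnected_S {r : ℝ} (hr : 0 < r) : IsPathConnected (S r) := by
  have hmem : ∀ θ, polarPoint r θ ∈ S r ↔ (r * cos θ) ^ 3 + (r * cos θ) ^ 2 < r ^ 2 := by
    intro θ
    have hθ := polarPoint_sq_add_sq r θ
    simp only [polarPoint_apply_zero, polarPoint_apply_one] at hθ
    simp only [S, mem_ofPred_eq, polarPoint_apply_zero, polarPoint_apply_one, hθ, true_and]
    constructor <;> intro h <;> linarith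
  have hfar : ∀ θ φ, polarPoint r θ ∈ S r → |θ| ≤ |φ| → |φ| ≤ π → polarPoint r φ ∈ S r := by
    intro θ φ hθ h hφ
    rw [hmem] at hθ ⊢
    exact cube_add_sq_lt_of_le hr (by nlinarith [neg_one_le_cos φ])
      (mul_le_mul_of_nonneg_left (cos_le_cos_of_abs_le h hφ) hr.le) hθ
  refine ⟨polarPoint r π, (hmem π).2 (by rw [cos_pi]; nlinarith [pow_pos hr 3]), fun {p} hp => ?_⟩
  obtain ⟨θ, hθ, rfl⟩ : ∃ θ, |θ| ≤ π ∧ polarPoint r θ = p :=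
    ⟨_, abs_le.2 ⟨(Complex.neg_pi_lt_arg _).le, Complex.arg_le_pi _⟩, polarPoint_arg hr.le hp.1⟩
  rcases le_total 0 θ with h | h
  · refine joinedIn_polarPoint fun φ hφ => ?_
    rw [uIcc_of_ge (le_of_abs_le hθ)] at hφ
    exact hfar θ φ hp (abs_le_abs_of_nonneg h hφ.1) (abs_le.2 ⟨by linarith [hφ.1, pi_pos], hφ.2⟩)
  · rw [← polarPoint_neg_pi]
    refine joinedIn_polarPoint fun φ hφ => ?_
    rw [uIcc_of_le (neg_le_of_abs_le hθ)] at hφ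
    exact hfar θ φ hp (abs_le_abs_of_nonpos h hφ.2) (abs_le.2 ⟨hφ.1, by linarith [hφ.2, pi_pos]⟩)

/-- **topology in Example `plik_8_3`.** The set
`Ω = {(x,y) ∈ ℝ² : x² + y² = 1, −y² < 0}` equals `S¹ \ {(1,0), (−1,0)}` and has exactly
two connected components, while for every `r > 0` the set
`S_r = {(x,y) : x² + y² = r², x³ − y² < 0}` is nonempty and connected. -/
theorem statement14 :
    ({p : EuclideanSpace ℝ (Fin 2) | (p 0) ^ 2 + (p 1) ^ 2 = 1 ∧ -(p 1) ^ 2 < 0} =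
      {p : EuclideanSpace ℝ (Fin 2) | (p 0) ^ 2 + (p 1) ^ 2 = 1} \
        {(!₂[1, 0] : EuclideanSpace ℝ (Fin 2)), (!₂[-1, 0] : EuclideanSpace ℝ (Fin 2))}) ∧
    Nat.card (ConnectedComponents
      ↥{p : EuclideanSpace ℝ (Fin 2) | (p 0) ^ 2 + (p 1) ^ 2 = 1 ∧ -(p 1) ^ 2 < 0}) = 2 ∧
    ∀ r > (0 : ℝ),
      ({p : EuclideanSpace ℝ (Fin 2) |
          (p 0) ^ 2 + (p 1) ^ 2 = r ^ 2 ∧ (p 0) ^ 3 - (p 1) ^ 2 < 0}).Nonempty ∧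
      IsConnected {p : EuclideanSpace ℝ (Fin 2) |
          (p 0) ^ 2 + (p 1) ^ 2 = r ^ 2 ∧ (p 0) ^ 3 - (p 1) ^ 2 < 0} := by
  refine ⟨Ω_eq_circle_diff, natCard_connectedComponents_Ω, fun r hr => ?_⟩
  have hconn := (isPathConnected_S hr).isConnected
  exact ⟨hconn.nonempty, hconn⟩
end

section
/- There exists r₀ > 0 such that for every r ∈ (0, r₀], the set S_r = {(x,y,z) ∈ ℝ³ : x² + y² + z² = r², xyz − z⁴ < 0} has exactly two connected components. -/
/-!
On `S_r` the coordinate `z` never vanishes, so `{z > 0}` and `{z < 0}` are clopen in `S_r`, and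
the half-turn `(x, y, z) ↦ (-x, y, -z)` exchanges them. The upper half is the graph of
`z = √(r² - x² - y²)` over the part of the open disc where `xy < z³`, a region star-shaped about
the origin. Hence both halves are connected, for every `r > 0`.
-/

open Set

theorem Topology.IsInducing.isConnected_image {X Y : Type*} [TopologicalSpace X]
    [TopologicalSpace Y] {f : X → Y} {s : Set X} (hf : IsInducing f) :
    IsConnected (f '' s) ↔ IsConnected s :=
  and_congr image_nonempty hf.isPreconnected_image

theorem natCard_connectedComponents_eq_two {X : Type*} [TopologicalSpace X] {U : Set X}
    (hU : IsClopen U) (hU₁ : IsConnected U) (hU₂ : IsConnected Uᶜ) :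
    Nat.card (ConnectedComponents X) = 2 := by
  have component_eq {V : Set X} (hV : IsClopen V) (hV₁ : IsConnected V) {x : X} (hx : x ∈ V) :
      connectedComponent x = V :=
    (hV.connectedComponent_subset hx).antisymm (hV₁.2.subset_connectedComponent hx)
  obtain ⟨u, hu⟩ := hU₁.nonempty
  obtain ⟨v, hv⟩ := hU₂.nonempty
  have comp_u := component_eq hU hU₁ hu
  have comp_v := component_eq hU.compl hU₂ hv
  rw [Nat.card_eq_two_iff]
  refine ⟨.mk u, .mk v, fun h => ?_, eq_univ_of_forall fun c => ?_⟩
  · rw [ConnectedComponents.coe_eq_coe, comp_u, comp_v] at h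
    exact h.subset hu hu
  · obtain ⟨x, rfl⟩ := ConnectedComponents.surjective_coe c
    simp only [mem_insert_iff, mem_singleton_iff, ConnectedComponents.coe_eq_coe]
    by_cases hx : x ∈ U
    · exact .inl (by rw [component_eq hU hU₁ hx, comp_u])
    · exact .inr (by rw [component_eq hU.compl hU₂ hx, comp_v])

def negSphere (r : ℝ) : Set (EuclideanSpace ℝ (Fin 3)) :=
  {p | p 0 ^ 2 + p 1 ^ 2 + p 2 ^ 2 = r ^ 2 ∧ p 0 * p 1 * p 2 - p 2 ^ 4 < 0}

lemma ne_zero_of_mem_negSphere {r : ℝ} {p : EuclideanSpace ℝ (Fin 3)} (hp : p ∈ negSphere r) :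
    p 2 ≠ 0 := by
  rintro h
  simpa [h] using hp.2

noncomputable def upperGraph (r : ℝ) (q : ℝ × ℝ) : EuclideanSpace ℝ (Fin 3) :=
  !₂[q.1, q.2, √(r ^ 2 - q.1 ^ 2 - q.2 ^ 2)]

lemma continuous_upperGraph (r : ℝ) : Continuous (upperGraph r) := by
  unfold upperGraph
  fun_prop

def upperDomain (r : ℝ) : Set (ℝ × ℝ) :=
  {q | q.1 ^ 2 + q.2 ^ 2 < r ^ 2 ∧ q.1 * q.2 < √(r ^ 2 - q.1 ^ 2 - q.2 ^ 2) ^ 3}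

/-- Shrinking `(x, y)` towards the origin shrinks `xy` when it is positive and raises the
height `z = √(r² - x² - y²)`, so it preserves `xy < z³`. -/
lemma starConvex_upperDomain (r : ℝ) : StarConvex ℝ 0 (upperDomain r) := by
  rintro ⟨x, y⟩ ⟨hdisc, hxy⟩ a b ha hb hab
  have hb₁ : b ^ 2 ≤ 1 := pow_le_one₀ hb (by linarith)
  simp only [upperDomain, smul_zero, zero_add, Prod.smul_mk, smul_eq_mul, mem_ofPred_eq]
    at hdisc hxy ⊢
  have hshrink : b ^ 2 * (x ^ 2 + y ^ 2) ≤ x ^ 2 + y ^ 2 :=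
    mul_le_of_le_one_left (by positivity) hb₁
  have hheight : √(r ^ 2 - x ^ 2 - y ^ 2) ≤ √(r ^ 2 - (b * x) ^ 2 - (b * y) ^ 2) :=
    Real.sqrt_le_sqrt (by nlinarith)
  refine ⟨by nlinarith, ?_⟩
  have hpos : 0 < √(r ^ 2 - (b * x) ^ 2 - (b * y) ^ 2) ^ 3 :=
    pow_pos (Real.sqrt_pos.2 (by nlinarith)) 3
  rcases le_or_gt (x * y) 0 with hneg | hposxy
  · nlinarith [mul_nonpos_of_nonneg_of_nonpos (sq_nonneg b) hneg]
  · calc b * x * (b * y) = b ^ 2 * (x * y) := by ring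
      _ ≤ x * y := mul_le_of_le_one_left hposxy.le hb₁
      _ < √(r ^ 2 - x ^ 2 - y ^ 2) ^ 3 := hxy
      _ ≤ _ := pow_le_pow_left₀ (Real.sqrt_nonneg _) hheight 3

lemma image_upperGraph_upperDomain (r : ℝ) :
    upperGraph r '' upperDomain r = negSphere r ∩ {p | 0 < p 2} := by
  ext p
  constructor
  · rintro ⟨⟨x, y⟩, ⟨hdisc, hxy⟩, rfl⟩
    set z := √(r ^ 2 - x ^ 2 - y ^ 2)
    have hz : 0 < z := Real.sqrt_pos.2 (by linarith)
    have hz2 : z ^ 2 = r ^ 2 - x ^ 2 - y ^ 2 := Real.sq_sqrt (by linarith)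
    show (x ^ 2 + y ^ 2 + z ^ 2 = r ^ 2 ∧ x * y * z - z ^ 4 < 0) ∧ 0 < z
    refine ⟨⟨by linarith, ?_⟩, hz⟩
    nlinarith [mul_lt_mul_of_pos_right hxy hz]
  · rintro ⟨⟨hsum, hneg⟩, hz : 0 < p 2⟩
    have hz' : √(r ^ 2 - p 0 ^ 2 - p 1 ^ 2) = p 2 := by
      rw [show r ^ 2 - p 0 ^ 2 - p 1 ^ 2 = p 2 ^ 2 by linarith]
      exact Real.sqrt_sq hz.le
    refine ⟨(p 0, p 1), ⟨by nlinarith, ?_⟩, ?_⟩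
    · rw [hz']
      exact lt_of_mul_lt_mul_right (by linear_combination hneg) hz.le
    · ext i
      fin_cases i <;> simp [upperGraph, hz']

lemma isConnected_negSphere_inter_pos {r : ℝ} (hr : 0 < r) :
    IsConnected (negSphere r ∩ {p | 0 < p 2}) := by
  rw [← image_upperGraph_upperDomain]
  refine (((starConvex_upperDomain r).isPathConnected ?_).isConnected).image _
    (continuous_upperGraph r).continuousOn
  simp [upperDomain, hr]

def halfTurnY (p : EuclideanSpace ℝ (Fin 3)) : EuclideanSpace ℝ (Fin 3) :=
  !₂[-p 0, p 1, -p 2]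

lemma halfTurnY_involutive : Function.Involutive halfTurnY := fun p => by
  ext i
  fin_cases i <;> simp [halfTurnY]

lemma image_halfTurnY_negSphere_inter_pos (r : ℝ) :
    halfTurnY '' (negSphere r ∩ {p | 0 < p 2}) = negSphere r ∩ {p | p 2 < 0} := by
  rw [halfTurnY_involutive.image_eq_preimage_symm]
  ext p
  change ((-p 0) ^ 2 + p 1 ^ 2 + (-p 2) ^ 2 = r ^ 2 ∧ -p 0 * p 1 * -p 2 - (-p 2) ^ 4 < 0) ∧
      0 < -p 2 ↔ (p 0 ^ 2 + p 1 ^ 2 + p 2 ^ 2 = r ^ 2 ∧ p 0 * p 1 * p 2 - p 2 ^ 4 < 0) ∧ p 2 < 0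
  constructor <;> rintro ⟨⟨hsum, hneg⟩, hz⟩ <;>
    exact ⟨⟨by linear_combination hsum, by linear_combination hneg⟩, by linarith⟩

lemma isConnected_negSphere_inter_neg {r : ℝ} (hr : 0 < r) :
    IsConnected (negSphere r ∩ {p | p 2 < 0}) := by
  rw [← image_halfTurnY_negSphere_inter_pos]
  exact (isConnected_negSphere_inter_pos hr).image _ (by unfold halfTurnY; fun_prop)

/-- **topology in Example `plik_8_4`.** There exists `r₀ > 0` such that for
every `r ∈ (0, r₀]` the set `S_r = {(x,y,z) : x² + y² + z² = r², xyz − z⁴ < 0}` has exactly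
two connected components. -/
theorem statement16 :
    ∃ r₀ > (0 : ℝ), ∀ r ∈ Ioc (0 : ℝ) r₀,
      Nat.card (ConnectedComponents
        ↥{p : EuclideanSpace ℝ (Fin 3) |
          (p 0) ^ 2 + (p 1) ^ 2 + (p 2) ^ 2 = r ^ 2 ∧
          p 0 * p 1 * p 2 - (p 2) ^ 4 < 0}) = 2 := by
  refine ⟨1, one_pos, fun r ⟨hr, _⟩ => ?_⟩
  change Nat.card (ConnectedComponents (negSphere r)) = 2
  have hcont : Continuous fun p : negSphere r => (p : EuclideanSpace ℝ (Fin 3)) 2 := by fun_prop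
  set U : Set (negSphere r) := Subtype.val ⁻¹' {p | 0 < p 2}
  have hU_compl : Uᶜ = Subtype.val ⁻¹' {p | p 2 < 0} := ext fun p =>
    not_lt.trans (ne_zero_of_mem_negSphere p.2).le_iff_lt
  have hU : IsClopen U :=
    ⟨isOpen_compl_iff.mp (hU_compl ▸ isOpen_lt hcont continuous_const), isOpen_lt continuous_const hcont⟩
  refine natCard_connectedComponents_eq_two hU ?_ ?_
  · rw [← Topology.IsInducing.subtypeVal.isConnected_image, Subtype.image_preimage_coe]
    exact isConnected_negSphere_inter_pos hr
  · rw [hU_compl, ← Topology.IsInducing.subtypeVal.isConnected_image, Subtype.image_preimage_coe]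
    exact isConnected_negSphere_inter_neg hr
end

section
/- There exists r₀ > 0 such that for every r ∈ (0, r₀], the set S_r = {(x,y,z) ∈ ℝ³ : x² + y² + z² = r², z(x² + y²) + x²y²z − z⁴ < 0} has exactly two connected components. -/
/-!
On `S_r` the coordinate `z` never vanishes, since `f` is divisible by `z`. Where `z < 0` every
term of `f = z (x² + y² + x²y²) - z⁴` is negative, so that part of `S_r` is the whole open lower
hemisphere. Where `z > 0`, `f < 0` means `x² + y² + x²y² < z³`; writing the upper hemisphere as the
graph of `z = √(r² - x² - y²)` over the disc, shrinking `(x, y)` towards `0` lowers the left side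
and raises `z`, so the domain is star-shaped about `0` and the upper part is path connected as
well. The sign of `z` separates the two parts, which gives exactly two components for every
`r > 0`.
-/

open Set Real

theorem card_connectedComponents_eq_two {X : Type*} [TopologicalSpace X] {A B : Set X}
    (hAB : IsCompl A B) (hA : IsOpen A) (hB : IsOpen B) (hA' : IsPreconnected A)
    (hB' : IsPreconnected B) (hAne : A.Nonempty) (hBne : B.Nonempty) :
    Nat.card (ConnectedComponents X) = 2 := by
  obtain ⟨a, ha⟩ := hAne
  obtain ⟨b, hb⟩ := hBne
  have hAclopen : IsClopen A := ⟨hAB.eq_compl ▸ hB.isClosed_compl, hA⟩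
  refine Nat.card_eq_two_iff.2 ⟨a, b, fun hab => ?_, eq_univ_of_forall fun c => ?_⟩
  · have hba : b ∈ connectedComponent a := ConnectedComponents.coe_eq_coe'.1 hab.symm
    exact hAB.disjoint.notMem_of_mem_left (hAclopen.connectedComponent_subset ha hba) hb
  · obtain ⟨x, rfl⟩ := ConnectedComponents.surjective_coe c
    by_cases hx : x ∈ A
    · exact .inl (ConnectedComponents.coe_eq_coe'.2 (hA'.subset_connectedComponent ha hx))
    · have hx : x ∈ B := by rwa [hAB.eq_compl, notMem_compl_iff] at hx
      exact .inr (ConnectedComponents.coe_eq_coe'.2 (hB'.subset_connectedComponent hb hx))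

namespace SphereSublevel

local notation "ℝ³" => EuclideanSpace ℝ (Fin 3)

def f (x y z : ℝ) : ℝ := z * (x ^ 2 + y ^ 2) + x ^ 2 * y ^ 2 * z - z ^ 4

def S (r : ℝ) : Set ℝ³ :=
  {p | p 0 ^ 2 + p 1 ^ 2 + p 2 ^ 2 = r ^ 2 ∧ f (p 0) (p 1) (p 2) < 0}

variable {x y z : ℝ}

lemma ne_zero_of_f_neg (h : f x y z < 0) : z ≠ 0 := by
  rintro rfl
  simp [f] at h

lemma f_zero_zero_neg (hz : z ≠ 0) : f 0 0 z < 0 := by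
  simp only [f]
  have : 0 < z ^ 4 := by positivity
  linarith

lemma f_neg_of_neg (hz : z < 0) : f x y z < 0 := by
  have h : z * (x ^ 2 + y ^ 2 + x ^ 2 * y ^ 2) ≤ 0 :=
    mul_nonpos_of_nonpos_of_nonneg hz.le (by positivity)
  have : 0 < z ^ 4 := Even.pow_pos (by decide) hz.ne
  simp only [f]
  linarith

lemma f_neg_iff_of_pos (hz : 0 < z) : f x y z < 0 ↔ x ^ 2 + y ^ 2 + x ^ 2 * y ^ 2 < z ^ 3 := by
  rw [show f x y z = z * (x ^ 2 + y ^ 2 + x ^ 2 * y ^ 2 - z ^ 3) by simp only [f]; ring,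
    mul_neg_iff]
  simp [hz, hz.not_gt]

/-- With `ε = 1` resp. `ε = -1` this parametrizes the upper resp. lower open hemisphere of the
sphere of radius `r` by the open disc of radius `r`. -/
noncomputable def hemisphereGraph (ε r : ℝ) (w : ℝ × ℝ) : ℝ³ :=
  !₂[w.1, w.2, ε * √(r ^ 2 - w.1 ^ 2 - w.2 ^ 2)]

lemma continuous_hemisphereGraph (ε r : ℝ) : Continuous (hemisphereGraph ε r) := by
  refine (PiLp.continuous_toLp 2 _).comp (continuous_pi fun i => ?_)
  fin_cases i <;> simp <;> fun_prop

def capDomain (ε r : ℝ) : Set (ℝ × ℝ) :=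
  {w | w.1 ^ 2 + w.2 ^ 2 < r ^ 2 ∧ f w.1 w.2 (ε * √(r ^ 2 - w.1 ^ 2 - w.2 ^ 2)) < 0}

lemma image_hemisphereGraph_capDomain {ε r : ℝ} (hε : |ε| = 1) :
    hemisphereGraph ε r '' capDomain ε r = S r ∩ {p | 0 < ε * p 2} := by
  have hεε : ε * ε = 1 := by rw [← abs_mul_abs_self, hε, one_mul]
  ext p
  constructor
  · rintro ⟨w, ⟨hw, hf⟩, rfl⟩
    have hpos : 0 < r ^ 2 - w.1 ^ 2 - w.2 ^ 2 := by linarith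
    simp only [S, hemisphereGraph, mem_inter_iff, mem_ofPred_eq, Matrix.cons_val_zero,
      Matrix.cons_val_one, Matrix.cons_val]
    refine ⟨⟨?_, hf⟩, ?_⟩
    · rw [mul_pow, sq_sqrt hpos.le, ← sq_abs ε, hε]
      ring
    · rw [← mul_assoc, hεε, one_mul]
      exact sqrt_pos.2 hpos
  · rintro ⟨⟨hs, hf⟩, hz⟩
    have hp2 : p 2 ≠ 0 := ne_zero_of_f_neg hf
    have hsqrt : ε * √(r ^ 2 - p 0 ^ 2 - p 1 ^ 2) = p 2 := by
      rw [show r ^ 2 - p 0 ^ 2 - p 1 ^ 2 = p 2 ^ 2 by linarith, sqrt_sq_eq_abs, ← one_mul |p 2|,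
        ← hε, ← abs_mul, abs_of_pos hz, ← mul_assoc, hεε, one_mul]
    have : 0 < p 2 ^ 2 := by positivity
    refine ⟨(p 0, p 1), ⟨by linarith, by rwa [hsqrt]⟩, ?_⟩
    ext i
    fin_cases i <;> simp [hemisphereGraph, hsqrt]

lemma sq_add_sq_smul_le {t : ℝ} (ht0 : 0 ≤ t) (ht1 : t ≤ 1) (w : ℝ × ℝ) :
    (t • w).1 ^ 2 + (t • w).2 ^ 2 ≤ w.1 ^ 2 + w.2 ^ 2 := by
  have ht2 : t ^ 2 ≤ 1 := pow_le_one₀ ht0 ht1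
  simp only [Prod.smul_fst, Prod.smul_snd, smul_eq_mul, mul_pow]
  nlinarith [sq_nonneg w.1, sq_nonneg w.2]

lemma sqrt_sub_le_sqrt_sub_smul (r : ℝ) {t : ℝ} (ht0 : 0 ≤ t) (ht1 : t ≤ 1) (w : ℝ × ℝ) :
    √(r ^ 2 - w.1 ^ 2 - w.2 ^ 2) ≤ √(r ^ 2 - (t • w).1 ^ 2 - (t • w).2 ^ 2) :=
  sqrt_le_sqrt (by linarith [sq_add_sq_smul_le ht0 ht1 w])

lemma starConvex_capDomain_one (r : ℝ) : StarConvex ℝ 0 (capDomain 1 r) := by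
  refine starConvex_zero_iff.2 fun w ⟨hw, hf⟩ t ht0 ht1 => ?_
  simp only [capDomain, one_mul, mem_ofPred_eq] at hf ⊢
  have hz : 0 < √(r ^ 2 - w.1 ^ 2 - w.2 ^ 2) := sqrt_pos.2 (by linarith)
  have hz' := sqrt_sub_le_sqrt_sub_smul r ht0 ht1 w
  rw [f_neg_iff_of_pos hz] at hf
  rw [f_neg_iff_of_pos (hz.trans_le hz')]
  refine ⟨(sq_add_sq_smul_le ht0 ht1 w).trans_lt hw, ?_⟩
  have ht2 : t ^ 2 ≤ 1 := pow_le_one₀ ht0 ht1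
  have ht4 : t ^ 2 * t ^ 2 ≤ 1 := mul_le_one₀ ht2 (sq_nonneg t) ht2
  calc (t • w).1 ^ 2 + (t • w).2 ^ 2 + (t • w).1 ^ 2 * (t • w).2 ^ 2
      ≤ w.1 ^ 2 + w.2 ^ 2 + w.1 ^ 2 * w.2 ^ 2 := by
        simp only [Prod.smul_fst, Prod.smul_snd, smul_eq_mul, mul_pow]
        nlinarith [sq_nonneg w.1, sq_nonneg w.2, mul_nonneg (sq_nonneg w.1) (sq_nonneg w.2)]
    _ < √(r ^ 2 - w.1 ^ 2 - w.2 ^ 2) ^ 3 := hf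
    _ ≤ √(r ^ 2 - (t • w).1 ^ 2 - (t • w).2 ^ 2) ^ 3 := by gcongr

lemma starConvex_capDomain_neg_one (r : ℝ) : StarConvex ℝ 0 (capDomain (-1) r) := by
  refine starConvex_zero_iff.2 fun w ⟨hw, _⟩ t ht0 ht1 => ?_
  have hsq := sq_add_sq_smul_le ht0 ht1 w
  refine ⟨hsq.trans_lt hw, f_neg_of_neg ?_⟩
  rw [neg_one_mul, neg_neg_iff_pos, sqrt_pos]
  linarith

lemma zero_mem_capDomain {ε r : ℝ} (hε : |ε| = 1) (hr : 0 < r) : (0 : ℝ × ℝ) ∈ capDomain ε r := by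
  have hε0 : ε ≠ 0 := by rintro rfl; simp at hε
  refine ⟨by simpa using pow_pos hr 2, f_zero_zero_neg ?_⟩
  simp [sqrt_sq hr.le, hε0, hr.ne']

lemma isPathConnected_S_inter {ε r : ℝ} (hε : |ε| = 1) (hr : 0 < r)
    (hU : StarConvex ℝ 0 (capDomain ε r)) : IsPathConnected (S r ∩ {p | 0 < ε * p 2}) := by
  rw [← image_hemisphereGraph_capDomain hε]
  exact (hU.isPathConnected (zero_mem_capDomain hε hr)).image (continuous_hemisphereGraph ε r)

theorem card_connectedComponents_S {r : ℝ} (hr : 0 < r) :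
    Nat.card (ConnectedComponents (S r)) = 2 := by
  let cap (ε : ℝ) : Set (S r) := ((↑) : S r → ℝ³) ⁻¹' {p | 0 < ε * p 2}
  have hopen (ε : ℝ) : IsOpen (cap ε) :=
    (isOpen_lt continuous_const (by fun_prop)).preimage continuous_subtype_val
  have hconn {ε : ℝ} (hε : |ε| = 1) (hU : StarConvex ℝ 0 (capDomain ε r)) :
      IsPreconnected (cap ε) ∧ (cap ε).Nonempty := by
    have h := isPathConnected_S_inter hε hr hU
    refine ⟨Topology.IsInducing.subtypeVal.isPreconnected_image.1 ?_,
      Subtype.preimage_coe_nonempty.2 h.nonempty⟩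
    rw [Subtype.image_preimage_coe]
    exact h.isConnected.isPreconnected
  obtain ⟨hA, hAne⟩ := hconn (ε := 1) (by simp) (starConvex_capDomain_one r)
  obtain ⟨hB, hBne⟩ := hconn (ε := -1) (by simp) (starConvex_capDomain_neg_one r)
  have hcompl : cap (-1) = (cap 1)ᶜ := by
    ext ⟨p, hp⟩
    have hp2 : p 2 ≠ 0 := ne_zero_of_f_neg hp.2
    simp only [cap, preimage_ofPred_eq, mem_ofPred_eq, mem_compl_iff, neg_mul, one_mul,
      Left.neg_pos_iff, not_lt]
    exact ⟨le_of_lt, fun h => h.lt_of_ne hp2⟩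
  exact card_connectedComponents_eq_two (hcompl ▸ isCompl_compl) (hopen 1) (hopen (-1)) hA hB
    hAne hBne

end SphereSublevel

/-- **topology in Example after Corollary `plik_7_1_1`.** There exists
`r₀ > 0` such that for every `r ∈ (0, r₀]` the set
`S_r = {(x,y,z) : x² + y² + z² = r², z(x² + y²) + x²y²z − z⁴ < 0}` has exactly two
connected components. -/
theorem statement18 :
    ∃ r₀ > (0 : ℝ), ∀ r ∈ Ioc (0 : ℝ) r₀,
      Nat.card (ConnectedComponents
        ↥{p : EuclideanSpace ℝ (Fin 3) |
          (p 0) ^ 2 + (p 1) ^ 2 + (p 2) ^ 2 = r ^ 2 ∧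
          p 2 * ((p 0) ^ 2 + (p 1) ^ 2) + (p 0) ^ 2 * (p 1) ^ 2 * p 2 - (p 2) ^ 4 < 0}) =
        2 :=
  ⟨1, one_pos, fun _ hr => SphereSublevel.card_connectedComponents_S hr.1⟩
end
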